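/- For the Poisson kernels P_r(t) = (1 − r²)/(1 − 2r cos t + r²) on 𝕋 (normalized so that (1/2π)∫_𝕋 P_r = 1) and any continuous λ: [0,1] → ℝ with λ(1) = 0 and lim_{r→1} λ(r)/(1−r) = ∞, one has lim_{δ→0} liminf_{r→1} (1/2π)∫_{-δλ(r)}^{δλ(r)} P_r(t) dt = 1, i.e., β = 1. -/

import Mathlib

/-!
Substituting `u = tan (t / 2)` gives
`(1 / 2π) ∫_{-a}^{a} P_r = (2 / π) arctan ((1 + r) / (1 - r) · tan (a / 2))` for `|a| < π`.
For `a = δ λ(r)` we have `a → 0` and `tan (a / 2) ≥ a / 2`, so the argument of `arctan` is at least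
`δ λ(r) / (2 (1 - r)) → ∞`. Hence for every `δ > 0` the integral tends to `1` as `r → 1⁻`,
and its liminf is `1`.
-/

open Real MeasureTheory Filter Topology Set intervalIntegral

/-- The Poisson kernel. -/
noncomputable def poissonKer (r t : ℝ) : ℝ :=
  (1 - r ^ 2) / (1 - 2 * r * Real.cos t + r ^ 2)

lemma poissonKer_denom_pos {r : ℝ} (hr : |r| < 1) (t : ℝ) :
    0 < 1 - 2 * r * cos t + r ^ 2 := by
  have hcos : r * cos t ≤ |r| := by
    refine (le_abs_self _).trans ?_
    rw [abs_mul]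
    exact mul_le_of_le_one_right (abs_nonneg r) (abs_cos_le_one t)
  nlinarith [sq_abs r, sq_pos_of_pos (sub_pos.2 hr)]

lemma continuous_poissonKer {r : ℝ} (hr : |r| < 1) : Continuous (poissonKer r) :=
  Continuous.div (by fun_prop) (by fun_prop) fun t => (poissonKer_denom_pos hr t).ne'

/-- A primitive of the Poisson kernel on `(-π, π)`, found by substituting `u = tan (t / 2)`. -/
lemma hasDerivAt_arctan_tan_half {r x : ℝ} (hr : |r| < 1) (hx : |x| < π) :
    HasDerivAt (fun y => 2 * arctan ((1 + r) / (1 - r) * tan (y / 2))) (poissonKer r x) x := by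
  rw [abs_lt] at hr hx
  have hc : 0 < cos (x / 2) := cos_pos_of_mem_Ioo ⟨by linarith, by linarith⟩
  have htan : HasDerivAt (fun y => tan (y / 2)) (1 / cos (x / 2) ^ 2 * (1 / 2)) x :=
    HasDerivAt.comp (h₂ := tan) x (hasDerivAt_tan hc.ne') ((hasDerivAt_id' x).div_const 2)
  refine ((hasDerivAt_arctan _).comp x (htan.const_mul ((1 + r) / (1 - r)))
    |>.const_mul 2).congr_deriv ?_
  have hcos : cos x = cos (x / 2) ^ 2 - sin (x / 2) ^ 2 := by
    rw [← cos_two_mul', mul_div_cancel₀ _ two_ne_zero]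
  have hden := poissonKer_denom_pos (abs_lt.2 hr) x
  rw [hcos] at hden
  have h1r : 1 - r ≠ 0 := by linarith
  rw [poissonKer, hcos, tan_eq_sin_div_cos]
  field_simp
  linear_combination -(1 - r ^ 2) * (1 + r ^ 2) * sin_sq_add_cos_sq (x / 2)

lemma integral_poissonKer {r a : ℝ} (hr : |r| < 1) (ha : |a| < π) :
    ∫ t in (-a)..a, poissonKer r t = 4 * arctan ((1 + r) / (1 - r) * tan (a / 2)) := by
  rw [integral_eq_sub_of_hasDerivAt (fun x hx => hasDerivAt_arctan_tan_half hr ?_)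
    ((continuous_poissonKer hr).intervalIntegrable _ _), neg_div, tan_neg, mul_neg, arctan_neg]
  · ring
  · rw [mem_uIcc] at hx
    rw [abs_lt] at ha ⊢
    constructor <;> rcases hx with hx | hx <;> linarith

lemma tendsto_integral_poissonKer_of_tendsto_div {a : ℝ → ℝ}
    (ha0 : Tendsto a (𝓝[<] 1) (𝓝 0)) (ha : Tendsto (fun r => a r / (1 - r)) (𝓝[<] 1) atTop) :
    Tendsto (fun r => (1 / (2 * π)) * ∫ t in (-a r)..(a r), poissonKer r t) (𝓝[<] 1) (𝓝 1) := by
  have hr : ∀ᶠ r in 𝓝[<] (1 : ℝ), r ∈ Ioo 0 1 := Ioo_mem_nhdsLT one_pos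
  have hpos : ∀ᶠ r in 𝓝[<] (1 : ℝ), 0 < a r := by
    filter_upwards [ha.eventually_gt_atTop 0, hr] with r hdiv hr
    exact (div_pos_iff_of_pos_right (sub_pos.2 hr.2)).1 hdiv
  have hsmall : ∀ᶠ r in 𝓝[<] (1 : ℝ), a r < π := ha0.eventually (eventually_lt_nhds pi_pos)
  have hfar : Tendsto (fun r => (1 + r) / (1 - r) * tan (a r / 2)) (𝓝[<] 1) atTop := by
    refine tendsto_atTop_mono' _ ?_ (ha.const_mul_atTop (one_half_pos (α := ℝ)))
    filter_upwards [hr, hpos, hsmall] with r hr hpos hsmall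
    have hhalf : a r / 2 ≤ tan (a r / 2) := le_tan (by positivity) (by linarith)
    have h1r : 0 < 1 - r := sub_pos.2 hr.2
    calc 1 / 2 * (a r / (1 - r)) = (a r / 2) / (1 - r) := by ring
      _ ≤ (1 + r) * tan (a r / 2) / (1 - r) := by gcongr; nlinarith [hr.1]
      _ = (1 + r) / (1 - r) * tan (a r / 2) := by ring
  have harctan := ((tendsto_nhds_of_tendsto_nhdsWithin tendsto_arctan_atTop).comp hfar).const_mul
    (2 / π)
  rw [div_mul_div_cancel₀ pi_ne_zero, div_self two_ne_zero] at harctan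
  refine harctan.congr' ?_
  filter_upwards [hr, hpos, hsmall] with r hr hpos hsmall
  rw [Function.comp_apply, integral_poissonKer (abs_lt.2 ⟨by linarith [hr.1], hr.2⟩)
    (abs_lt.2 ⟨by linarith, hsmall⟩)]
  field_simp
  ring

theorem littlewood_stmt13 (lam : ℝ → ℝ) (hlam : ContinuousOn lam (Icc 0 1))
    (hlam1 : lam 1 = 0)
    (htan : Tendsto (fun r => lam r / (1 - r)) (𝓝[<] (1 : ℝ)) atTop) :
    Tendsto (fun δ : ℝ =>
        liminf (fun r : ℝ =>
            (1 / (2 * π)) * ∫ t in (-(δ * lam r))..(δ * lam r), poissonKer r t)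
          (𝓝[<] (1 : ℝ)))
      (𝓝[>] (0 : ℝ)) (𝓝 1) := by
  have hlam0 : Tendsto lam (𝓝[<] 1) (𝓝 0) := by
    rw [← hlam1]
    exact (hlam.continuousWithinAt (right_mem_Icc.2 zero_le_one)).mono_of_mem_nhdsWithin
      (Icc_mem_nhdsLT zero_lt_one)
  refine tendsto_const_nhds.congr' ?_
  filter_upwards [self_mem_nhdsWithin] with δ (hδ : 0 < δ)
  refine (Tendsto.liminf_eq ?_).symm
  refine tendsto_integral_poissonKer_of_tendsto_div (by simpa using hlam0.const_mul δ) ?_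
  simpa only [mul_div_assoc] using htan.const_mul_atTop hδ
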